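/- (Tarski's Theorem) Let S be a preordered abelian monoid and y ∈ S with y ≠ 0. Then y is not paradoxical if and only if there exists a state ν : S → [0,∞] with ν(y) = 1. Moreover, if y is not paradoxical, then for any given x ∈ ⟨y⟩ the state may be chosen so that in addition ν(x) = inf{(p − q)/k : p, q ∈ ℕ, k ∈ ℕ with k ≥ 1, and q·y + k·x ≤ p·y}. -/

import Mathlib

open scoped ENNReal

/-- A state on a preordered abelian monoid. -/
def IsState {S : Type*} [AddCommMonoid S] [Preorder S] (ν : S → ℝ≥0∞) : Prop :=
  ν 0 = 0 ∧ (∀ a b : S, ν (a + b) = ν a + ν b) ∧ ∀ a b : S, a ≤ b → ν a ≤ ν b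

/-!
Tarski's theorem is a Hahn–Banach sandwich argument in a preordered monoid, carried out with
`ℝ≥0∞`-valued functions so that the upper bound may be `∞` outside the ideal generated by `y`.
Below the monotone subadditive bound `s ↦ inf {p : s ≤ p • y}` we pick, by Zorn, a minimal
monotone subadditive function `P` dominating the superadditive lower bound
`s ↦ sup {n + m γ : n • y + m • x ≤ s}`, where `γ` is the stable ratio of `x` to `y`.
Minimality means `P` cannot be cut down at any point `a` below its value there, and this forces
`P (a + b) ≥ P a + P b`, so `P` is a state. Non-paradoxicality of `y` is exactly what keeps the
lower bound below the upper one.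
-/

lemma natCast_mul_le_of_superadditive {T : Type*} [AddCommMonoid T] {q : T → ℝ≥0∞}
    (hq : ∀ a b, q a + q b ≤ q (a + b)) (n : ℕ) (a : T) : n * q a ≤ q (n • a) := by
  induction n with
  | zero => simp
  | succ n ih =>
    calc ((n + 1 : ℕ) : ℝ≥0∞) * q a = n * q a + q a := by push_cast; ring
      _ ≤ q (n • a) + q a := by gcongr
      _ ≤ q ((n + 1) • a) := by rw [succ_nsmul]; exact hq _ _

section Sandwich

variable {T : Type*} [AddCommMonoid T] [Preorder T]

structure IsSubadditiveMajorant (q P : T → ℝ≥0∞) : Prop where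
  monotone : Monotone P
  map_zero : P 0 = 0
  map_add_le : ∀ a b, P (a + b) ≤ P a + P b
  le : q ≤ P

variable {q P : T → ℝ≥0∞}

namespace IsSubadditiveMajorant

lemma map_nsmul_le (hP : IsSubadditiveMajorant q P) (n : ℕ) (a : T) : P (n • a) ≤ n * P a := by
  induction n with
  | zero => simp [hP.map_zero]
  | succ n ih =>
    calc P ((n + 1) • a) ≤ P (n • a) + P a := by rw [succ_nsmul]; exact hP.map_add_le _ _
      _ ≤ n * P a + P a := by gcongr
      _ = ((n + 1 : ℕ) : ℝ≥0∞) * P a := by push_cast; ring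

lemma iInf_of_isChain {c : Set (T → ℝ≥0∞)} (hc : IsChain (· ≤ ·) c) (hne : c.Nonempty)
    (h : ∀ P ∈ c, IsSubadditiveMajorant q P) :
    IsSubadditiveMajorant q (fun s => ⨅ P ∈ c, P s) where
  monotone _ _ hab := iInf₂_mono fun P hP => (h P hP).monotone hab
  map_zero := by
    obtain ⟨P, hP⟩ := hne
    exact le_antisymm (iInf₂_le_of_le P hP (h P hP).map_zero.le) zero_le
  map_add_le a b := by
    simp_rw [ENNReal.iInf_add, ENNReal.add_iInf]
    refine le_iInf₂ fun P hP => le_iInf₂ fun P' hP' => ?_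
    -- the smaller of the two functions of the chain witnesses the inequality
    rcases hc.total hP hP' with hle | hle
    · exact iInf₂_le_of_le P hP <| ((h P hP).map_add_le a b).trans (by gcongr; exact hle b)
    · exact iInf₂_le_of_le P' hP' <| ((h P' hP').map_add_le a b).trans (by gcongr; exact hle a)
  le s := le_iInf₂ fun P hP => (h P hP).le s

end IsSubadditiveMajorant

/-- The inf-convolution of `P` with `n • a ↦ n * c`. -/
noncomputable def capAt (P : T → ℝ≥0∞) (a : T) (c : ℝ≥0∞) (s : T) : ℝ≥0∞ :=
  ⨅ (n : ℕ) (t : T) (_ : s ≤ t + n • a), P t + n * c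

lemma capAt_le (a : T) (c : ℝ≥0∞) (s : T) : capAt P a c s ≤ P s :=
  iInf_le_of_le 0 <| iInf_le_of_le s <| iInf_le_of_le (by simp) (by simp)

lemma capAt_apply_self_le (h0 : P 0 = 0) (a : T) (c : ℝ≥0∞) : capAt P a c a ≤ c :=
  iInf_le_of_le 1 <| iInf_le_of_le 0 <| iInf_le_of_le (by simp) (by simp [h0])

lemma IsSubadditiveMajorant.capAt [AddLeftMono T] (hP : IsSubadditiveMajorant q P)
    (hq : Monotone q) {a : T} {c : ℝ≥0∞} (hc : ∀ (n : ℕ) t, q (t + n • a) ≤ P t + n * c) :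
    IsSubadditiveMajorant q (capAt P a c) where
  monotone _ _ hss' := iInf₂_mono fun _ _ => iInf_mono' fun h => ⟨hss'.trans h, le_rfl⟩
  map_zero := le_antisymm ((capAt_le a c 0).trans hP.map_zero.le) zero_le
  map_add_le s₁ s₂ := by
    simp_rw [_root_.capAt, ENNReal.iInf_add, ENNReal.add_iInf]
    refine le_iInf₂ fun n₁ t₁ => le_iInf fun h₁ => le_iInf₂ fun n₂ t₂ => le_iInf fun h₂ => ?_
    have hle : s₁ + s₂ ≤ t₁ + t₂ + (n₁ + n₂) • a := by
      rw [add_nsmul, add_add_add_comm]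
      exact add_le_add h₁ h₂
    refine iInf_le_of_le (n₁ + n₂) <| iInf_le_of_le (t₁ + t₂) <| iInf_le_of_le hle ?_
    calc P (t₁ + t₂) + ((n₁ + n₂ : ℕ) : ℝ≥0∞) * c
        = P (t₁ + t₂) + (n₁ * c + n₂ * c) := by push_cast; ring
      _ ≤ P t₁ + P t₂ + (n₁ * c + n₂ * c) := by gcongr; exact hP.map_add_le _ _
      _ = P t₁ + n₁ * c + (P t₂ + n₂ * c) := by ring
  le s := le_iInf₂ fun n t => le_iInf fun h => (hq h).trans (hc n t)

lemma exists_minimal_isSubadditiveMajorant {D : T → ℝ≥0∞} (hD : IsSubadditiveMajorant q D) :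
    ∃ P ≤ D, Minimal (IsSubadditiveMajorant q) P := by
  obtain ⟨P, hPD, hP⟩ := zorn_le_nonempty₀ (α := (T → ℝ≥0∞)ᵒᵈ)
    {P | IsSubadditiveMajorant q (OrderDual.ofDual P)} (fun c hcs hc P hP =>
      ⟨OrderDual.toDual fun s => ⨅ P ∈ c, OrderDual.ofDual P s,
        IsSubadditiveMajorant.iInf_of_isChain hc.symm ⟨P, hP⟩ hcs,
        fun P hP s => iInf₂_le P hP⟩) (OrderDual.toDual D) hD
  exact ⟨P, hPD, hP.1, fun P' hP' h => hP.2 hP' h⟩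

lemma Minimal.apply_le_of_forall_le [AddLeftMono T] (hP : Minimal (IsSubadditiveMajorant q) P)
    (hq : Monotone q) {a : T} {c : ℝ≥0∞} (hc : ∀ (n : ℕ) t, q (t + n • a) ≤ P t + n * c) :
    P a ≤ c :=
  (hP.2 (hP.1.capAt hq hc) (capAt_le a c) a).trans (capAt_apply_self_le hP.1.map_zero a c)

lemma IsSubadditiveMajorant.add_mul_lt_nsmul (hP : IsSubadditiveMajorant q P)
    (hq : ∀ a b, q a + q b ≤ q (a + b)) {a t : T} {n m : ℕ} {c : ℝ≥0∞}
    (h : P t + n * c < q (t + n • a)) (hm : m ≠ 0) :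
    P (m • t) + ((m * n : ℕ) : ℝ≥0∞) * c < q (m • t + (m * n) • a) :=
  calc P (m • t) + ((m * n : ℕ) : ℝ≥0∞) * c ≤ m * (P t + n * c) := by
        rw [Nat.cast_mul, mul_add, mul_assoc]; gcongr; exact hP.map_nsmul_le m t
    _ < m * q (t + n • a) :=
        (ENNReal.mul_lt_mul_iff_right (by simpa) (ENNReal.natCast_ne_top m)).2 h
    _ ≤ q (m • (t + n • a)) := natCast_mul_le_of_superadditive hq m _
    _ = q (m • t + (m * n) • a) := by rw [smul_add, smul_smul]

lemma Minimal.exists_lt_of_lt [AddLeftMono T] (hP : Minimal (IsSubadditiveMajorant q) P)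
    (hq : Monotone q) {a : T} {c : ℝ≥0∞} (h : c < P a) :
    ∃ n : ℕ, n ≠ 0 ∧ ∃ t, P t + n * c < q (t + n • a) := by
  by_contra! hc
  refine h.not_ge (hP.apply_le_of_forall_le hq fun n t => ?_)
  rcases eq_or_ne n 0 with rfl | hn
  · simpa using hP.1.le t
  · exact hc n hn t

lemma Minimal.map_add [AddLeftMono T] (hzero : ∀ a : T, 0 ≤ a)
    (hP : Minimal (IsSubadditiveMajorant q) P) (hq_mono : Monotone q)
    (hq_add : ∀ a b, q a + q b ≤ q (a + b)) (a b : T) : P (a + b) = P a + P b := by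
  refine le_antisymm (hP.1.map_add_le a b) (le_of_not_gt fun hlt => ?_)
  rcases eq_or_ne (P a) 0 with ha | ha
  · rw [ha, zero_add] at hlt
    exact hlt.not_ge (hP.1.monotone (le_add_of_nonneg_left (hzero a)))
  rcases eq_or_ne (P b) 0 with hb | hb
  · rw [hb, add_zero] at hlt
    exact hlt.not_ge (hP.1.monotone (le_add_of_nonneg_right (hzero b)))
  obtain ⟨c₁, hc₁, c₂, hc₂, hc⟩ := ENNReal.exists_lt_add_of_lt_add hlt ha hb
  obtain ⟨n₁, hn₁, t₁, h₁⟩ := hP.exists_lt_of_lt hq_mono hc₁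
  obtain ⟨n₂, hn₂, t₂, h₂⟩ := hP.exists_lt_of_lt hq_mono hc₂
  have h₁' := hP.1.add_mul_lt_nsmul hq_add h₁ hn₂
  have h₂' := hP.1.add_mul_lt_nsmul hq_add h₂ hn₁
  -- both witnesses, rescaled to the common multiple `n₂ * n₁`, add up to a witness for `a + b`
  rw [mul_comm n₁ n₂] at h₂'
  set N := n₂ * n₁
  set u := n₂ • t₁
  set v := n₁ • t₂
  have key : P u + P v + N * (c₁ + c₂) < P u + P v + N * P (a + b) :=
    calc P u + P v + N * (c₁ + c₂) = (P u + N * c₁) + (P v + N * c₂) := by ring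
      _ < q (u + N • a) + q (v + N • b) := ENNReal.add_lt_add h₁' h₂'
      _ ≤ q (u + v + N • (a + b)) := by rw [nsmul_add, add_add_add_comm]; exact hq_add _ _
      _ ≤ P (u + v + N • (a + b)) := hP.1.le _
      _ ≤ P u + P v + N * P (a + b) :=
        (hP.1.map_add_le _ _).trans (add_le_add (hP.1.map_add_le _ _) (hP.1.map_nsmul_le _ _))
  exact hc.not_gt (lt_of_mul_lt_mul_left' (lt_of_add_lt_add_left key))

theorem exists_isState_between [AddLeftMono T] (hzero : ∀ a : T, 0 ≤ a) {D : T → ℝ≥0∞}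
    (hq_mono : Monotone q) (hq_add : ∀ a b, q a + q b ≤ q (a + b))
    (hD : IsSubadditiveMajorant q D) : ∃ μ, IsState μ ∧ q ≤ μ ∧ μ ≤ D := by
  obtain ⟨P, hPD, hP⟩ := exists_minimal_isSubadditiveMajorant hD
  exact ⟨P, ⟨hP.1.map_zero, hP.map_add hzero hq_mono hq_add, fun _ _ h => hP.1.monotone h⟩,
    hP.1.le, hPD⟩

end Sandwich

section Tarski

variable {S : Type*} [AddCommMonoid S] [Preorder S]

/-- The relation `x <ₛ y`. -/
def StablyDominated (x y : S) : Prop :=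
  ∃ n : ℕ, 1 ≤ n ∧ (n + 1) • x ≤ n • y

noncomputable def stableRatio (x y : S) : ℝ≥0∞ :=
  sInf {r : ℝ≥0∞ | ∃ p q k : ℕ, 1 ≤ k ∧ q • y + k • x ≤ p • y ∧
    r = ((p : ℝ≥0∞) - (q : ℝ≥0∞)) / (k : ℝ≥0∞)}

noncomputable def upperGauge (y s : S) : ℝ≥0∞ :=
  ⨅ (p : ℕ) (_ : s ≤ p • y), (p : ℝ≥0∞)

noncomputable def lowerGauge (y x : S) (γ : ℝ≥0∞) (s : S) : ℝ≥0∞ :=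
  ⨆ (nm : ℕ × ℕ) (_ : nm.1 • y + nm.2 • x ≤ s), (nm.1 + nm.2 * γ : ℝ≥0∞)

lemma IsState.map_nsmul {ν : S → ℝ≥0∞} (hν : IsState ν) (n : ℕ) (a : S) :
    ν (n • a) = n * ν a := by
  induction n with
  | zero => simp [hν.1]
  | succ n ih => rw [succ_nsmul, hν.2.1, ih]; push_cast; ring

lemma IsState.not_stablyDominated_self {ν : S → ℝ≥0∞} (hν : IsState ν) {y : S} (hy : ν y = 1) :
    ¬ StablyDominated y y := by
  rintro ⟨n, -, h⟩
  have := hν.2.2 _ _ h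
  simp only [hν.map_nsmul, hy, mul_one] at this
  have : n + 1 ≤ n := by exact_mod_cast this
  omega

lemma IsState.apply_le_stableRatio {ν : S → ℝ≥0∞} (hν : IsState ν) {y : S} (hy : ν y = 1)
    (x : S) : ν x ≤ stableRatio x y := by
  refine le_sInf ?_
  rintro r ⟨p, q, k, hk, h, rfl⟩
  have hle := hν.2.2 _ _ h
  rw [hν.2.1, hν.map_nsmul, hν.map_nsmul, hν.map_nsmul, hy, mul_one, mul_one] at hle
  rw [ENNReal.le_div_iff_mul_le (Or.inl (by simp; omega)) (Or.inl (ENNReal.natCast_ne_top k)),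
    mul_comm]
  exact ENNReal.le_sub_of_add_le_left (ENNReal.natCast_ne_top q) hle

lemma le_lowerGauge {y x s : S} {γ : ℝ≥0∞} {n m : ℕ} (h : n • y + m • x ≤ s) :
    n + m * γ ≤ lowerGauge y x γ s :=
  le_iSup₂_of_le (n, m) h le_rfl

lemma lowerGauge_monotone (y x : S) (γ : ℝ≥0∞) : Monotone (lowerGauge y x γ) :=
  fun _ _ hss' => iSup₂_mono' fun nm hnm => ⟨nm, hnm.trans hss', le_rfl⟩

lemma upperGauge_le {y s : S} {p : ℕ} (h : s ≤ p • y) : upperGauge y s ≤ p :=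
  iInf₂_le p h

variable [AddLeftMono S]

lemma lowerGauge_add_le (hzero : ∀ a : S, 0 ≤ a) (y x : S) (γ : ℝ≥0∞) (s₁ s₂ : S) :
    lowerGauge y x γ s₁ + lowerGauge y x γ s₂ ≤ lowerGauge y x γ (s₁ + s₂) :=
  ENNReal.biSup_add_biSup_le' ⟨(0, 0), by simpa using hzero s₁⟩ ⟨(0, 0), by simpa using hzero s₂⟩
    fun nm₁ h₁ nm₂ h₂ => by
      have hle : (nm₁.1 + nm₂.1) • y + (nm₁.2 + nm₂.2) • x ≤ s₁ + s₂ := by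
        convert add_le_add h₁ h₂ using 1
        rw [add_nsmul, add_nsmul]
        abel
      calc (nm₁.1 + nm₁.2 * γ : ℝ≥0∞) + (nm₂.1 + nm₂.2 * γ)
          = ((nm₁.1 + nm₂.1 : ℕ) : ℝ≥0∞) + ((nm₁.2 + nm₂.2 : ℕ) : ℝ≥0∞) * γ := by push_cast; ring
        _ ≤ lowerGauge y x γ (s₁ + s₂) := le_lowerGauge hle

lemma le_of_nsmul_le_nsmul_of_not_stablyDominated (hzero : ∀ a : S, 0 ≤ a) {y : S}
    (hy : ¬ StablyDominated y y) {n p : ℕ} (h : n • y ≤ p • y) : n ≤ p := by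
  by_contra! hpn
  have hle : (p + 1) • y ≤ p • y := (nsmul_le_nsmul_left (hzero y) hpn).trans h
  rcases eq_or_ne p 0 with rfl | hp
  · refine hy ⟨1, le_rfl, ?_⟩
    rw [zero_add, one_nsmul, zero_nsmul] at hle
    calc (1 + 1) • y = y + y := by rw [add_nsmul, one_nsmul]
      _ ≤ y + 0 := add_le_add le_rfl hle
      _ = 1 • y := by rw [add_zero, one_nsmul]
  · exact hy ⟨p, Nat.one_le_iff_ne_zero.2 hp, hle⟩

lemma natCast_add_mul_stableRatio_le (hzero : ∀ a : S, 0 ≤ a) {x y : S}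
    (hy : ¬ StablyDominated y y) {n m p : ℕ} (h : n • y + m • x ≤ p • y) :
    n + m * stableRatio x y ≤ p := by
  have hnp : n ≤ p := le_of_nsmul_le_nsmul_of_not_stablyDominated hzero hy
    ((le_add_of_nonneg_right (hzero _)).trans h)
  rcases eq_or_ne m 0 with rfl | hm
  · simpa using hnp
  have hγ : stableRatio x y ≤ (p - n) / m :=
    sInf_le ⟨p, n, m, Nat.one_le_iff_ne_zero.2 hm, h, rfl⟩
  calc (n : ℝ≥0∞) + m * stableRatio x y ≤ n + m * ((p - n) / m) := by gcongr
    _ = p := by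
      rw [ENNReal.mul_div_cancel (by simpa) (ENNReal.natCast_ne_top m),
        add_tsub_cancel_of_le (by exact_mod_cast hnp)]

lemma isSubadditiveMajorant_upperGauge (hzero : ∀ a : S, 0 ≤ a) {y : S}
    (hy : ¬ StablyDominated y y) (x : S) :
    IsSubadditiveMajorant (lowerGauge y x (stableRatio x y)) (upperGauge y) where
  monotone _ _ hss' := iInf₂_mono' fun p hp => ⟨p, hss'.trans hp, le_rfl⟩
  map_zero :=
    le_antisymm (by simpa using upperGauge_le (y := y) (s := 0) (p := 0) (by simp)) zero_le
  map_add_le s₁ s₂ := by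
    simp_rw [upperGauge, ENNReal.iInf_add, ENNReal.add_iInf]
    refine le_iInf₂ fun p₁ h₁ => le_iInf₂ fun p₂ h₂ => ?_
    have hle : s₁ + s₂ ≤ (p₁ + p₂) • y := by rw [add_nsmul]; exact add_le_add h₁ h₂
    exact (upperGauge_le hle).trans_eq (Nat.cast_add _ _)
  le _ := iSup₂_le fun _ hnm => le_iInf₂ fun _ hp =>
    natCast_add_mul_stableRatio_le hzero hy (hnm.trans hp)

theorem exists_isState_eq_stableRatio (hzero : ∀ a : S, 0 ≤ a) {y : S}
    (hy : ¬ StablyDominated y y) (x : S) :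
    ∃ ν, IsState ν ∧ ν y = 1 ∧ ν x = stableRatio x y := by
  obtain ⟨ν, hν, hlow, hup⟩ := exists_isState_between hzero (lowerGauge_monotone y x _)
    (lowerGauge_add_le hzero y x _) (isSubadditiveMajorant_upperGauge hzero hy x)
  have hνy : ν y = 1 := by
    refine le_antisymm ((hup y).trans (by simpa using upperGauge_le (p := 1) (one_nsmul y).ge)) ?_
    simpa using (le_lowerGauge (n := 1) (m := 0) (x := x) (γ := stableRatio x y) (by simp)).trans
      (hlow y)
  refine ⟨ν, hν, hνy, le_antisymm (hν.apply_le_stableRatio hνy x) ?_⟩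
  simpa using (le_lowerGauge (n := 0) (m := 1) (y := y) (by simp)).trans (hlow x)

end Tarski

theorem stmt8_general {S : Type*} [AddCommMonoid S] [Preorder S]
    (hzero : ∀ x : S, 0 ≤ x)
    (hadd : ∀ x y z : S, x ≤ y → x + z ≤ y + z)
    (y : S) :
    ((¬ ∃ n : ℕ, 1 ≤ n ∧ (n + 1) • y ≤ n • y) ↔
      ∃ ν : S → ℝ≥0∞, IsState ν ∧ ν y = 1) ∧
    ((¬ ∃ n : ℕ, 1 ≤ n ∧ (n + 1) • y ≤ n • y) →
      ∀ x : S, (∃ n : ℕ, x ≤ n • y) →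
        ∃ ν : S → ℝ≥0∞, IsState ν ∧ ν y = 1 ∧
          ν x = sInf {r : ℝ≥0∞ | ∃ p q k : ℕ, 1 ≤ k ∧
            q • y + k • x ≤ p • y ∧
            r = ((p : ℝ≥0∞) - (q : ℝ≥0∞)) / (k : ℝ≥0∞)}) := by
  have : AddLeftMono S := ⟨fun z a b h => by simpa only [add_comm z] using hadd a b z h⟩
  refine ⟨⟨fun hy => ?_, fun ⟨ν, hν, hνy⟩ => hν.not_stablyDominated_self hνy⟩,
    fun hy x _ => exists_isState_eq_stableRatio hzero hy x⟩
  obtain ⟨ν, hν, hνy, -⟩ := exists_isState_eq_stableRatio hzero hy y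
  exact ⟨ν, hν, hνy⟩

/-- Tarski's Theorem: a nonzero element `y` of a preordered abelian monoid is not
paradoxical if and only if there is a state `ν` with `ν y = 1`.  Moreover, if `y` is not
paradoxical, then for any `x ∈ ⟨y⟩` the state can be chosen such that additionally
`ν x = inf {(p - q)/k : q • y + k • x ≤ p • y, k ≥ 1}`. -/
theorem stmt8 {S : Type*} [AddCommMonoid S] [Preorder S]
    (hzero : ∀ x : S, 0 ≤ x)
    (hadd : ∀ x y z : S, x ≤ y → x + z ≤ y + z)
    (y : S) (hy : y ≠ 0) :
    ((¬ ∃ n : ℕ, 1 ≤ n ∧ (n + 1) • y ≤ n • y) ↔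
      ∃ ν : S → ℝ≥0∞, IsState ν ∧ ν y = 1) ∧
    ((¬ ∃ n : ℕ, 1 ≤ n ∧ (n + 1) • y ≤ n • y) →
      ∀ x : S, (∃ n : ℕ, x ≤ n • y) →
        ∃ ν : S → ℝ≥0∞, IsState ν ∧ ν y = 1 ∧
          ν x = sInf {r : ℝ≥0∞ | ∃ p q k : ℕ, 1 ≤ k ∧
            q • y + k • x ≤ p • y ∧
            r = ((p : ℝ≥0∞) - (q : ℝ≥0∞)) / (k : ℝ≥0∞)}) :=
  stmt8_general hzero hadd y
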